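/- arXiv:2604.04928 — 3 statements merged into one kernel-verified Lean document; each statement's English description precedes it below -/
import Mathlib

section
/- For a quadratic polynomial Q₁(x) = (2gμ + 4)x² + (g−4)(m₂−m₁)x + 2(g−2)m₁m₂ where m₁, m₂ are positive integers, μ = m₁ + m₂ ≥ 2, and g ≥ 3 is an integer, the discriminant satisfies (g−4)²(m₂−m₁)² − 8(2gμ+4)(g−2)m₁m₂ < 0, hence Q₁(x) > 0 for all real x. -/
/-- For the quadratic `Q₁(x) = (2gμ + 4)x² + (g−4)(m₂−m₁)x + 2(g−2)m₁m₂`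
with `m₁, m₂` positive integers, `μ = m₁ + m₂`, `g ≥ 3` an integer, the discriminant
satisfies `(g−4)²(m₂−m₁)² − 8(2gμ+4)(g−2)m₁m₂ < 0`, hence `Q₁(x) > 0` for all real `x`. -/
theorem stmt_0 (g m1 m2 : ℕ) (hg : 3 ≤ g) (hm1 : 1 ≤ m1) (hm2 : 1 ≤ m2) :
    ((g : ℝ) - 4) ^ 2 * ((m2 : ℝ) - m1) ^ 2
      - 8 * (2 * (g : ℝ) * ((m1 : ℝ) + m2) + 4) * ((g : ℝ) - 2) * ((m1 : ℝ) * m2) < 0 ∧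
    ∀ x : ℝ,
      0 < (2 * (g : ℝ) * ((m1 : ℝ) + m2) + 4) * x ^ 2
            + ((g : ℝ) - 4) * ((m2 : ℝ) - m1) * x + 2 * ((g : ℝ) - 2) * ((m1 : ℝ) * m2) := by
  have hg' : (3 : ℝ) ≤ g := by exact_mod_cast hg
  have hm1' : (1 : ℝ) ≤ m1 := by exact_mod_cast hm1
  have hm2' : (1 : ℝ) ≤ m2 := by exact_mod_cast hm2
  have hdisc : ((g : ℝ) - 4) ^ 2 * ((m2 : ℝ) - m1) ^ 2
      - 8 * (2 * (g : ℝ) * ((m1 : ℝ) + m2) + 4) * ((g : ℝ) - 2) * ((m1 : ℝ) * m2) < 0 := by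
    set u : ℝ := (m1 : ℝ) + m2 with hu
    have hprod : (0:ℝ) ≤ ((m1:ℝ) - 1) * ((m2:ℝ) - 1) := by
      apply mul_nonneg <;> linarith
    have h1 : ((m2 : ℝ) - m1) ^ 2 ≤ (u - 2) ^ 2 := by nlinarith
    have h2 : u - 1 ≤ (m1 : ℝ) * m2 := by nlinarith
    have hu2 : (2:ℝ) ≤ u := by linarith
    have hkey : ((g:ℝ) - 4) ^ 2 * (u - 2) ^ 2
        < 8 * (2 * (g:ℝ) * u + 4) * ((g:ℝ) - 2) * (u - 1) := by
      nlinarith [sq_nonneg ((g:ℝ)-4), sq_nonneg (u-2), mul_nonneg (by linarith : (0:ℝ) ≤ (g:ℝ)-3) (sq_nonneg (u-2)), mul_nonneg (by linarith : (0:ℝ) ≤ u-2) (by linarith : (0:ℝ) ≤ (g:ℝ)-2), sq_nonneg (((g:ℝ)-4)*(u-2)), mul_pos (by linarith : (0:ℝ) < (g:ℝ)-2) (by linarith : (0:ℝ) < u-1)]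
    have hb : (0:ℝ) < 8 * (2 * (g:ℝ) * u + 4) * ((g:ℝ) - 2) := by nlinarith
    have : ((g : ℝ) - 4) ^ 2 * ((m2 : ℝ) - m1) ^ 2 < 8 * (2 * (g:ℝ) * u + 4) * ((g:ℝ) - 2) * ((m1:ℝ) * m2) := by
      calc ((g : ℝ) - 4) ^ 2 * ((m2 : ℝ) - m1) ^ 2
        ≤ ((g:ℝ) - 4) ^ 2 * (u - 2) ^ 2 := by nlinarith [sq_nonneg ((g:ℝ)-4)]
      _ < 8 * (2 * (g:ℝ) * u + 4) * ((g:ℝ) - 2) * (u - 1) := hkey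
      _ ≤ 8 * (2 * (g:ℝ) * u + 4) * ((g:ℝ) - 2) * ((m1:ℝ) * m2) := by nlinarith
    linarith
  refine ⟨hdisc, fun x => ?_⟩
  have ha : (0 : ℝ) < 2 * (g : ℝ) * ((m1 : ℝ) + m2) + 4 := by nlinarith
  nlinarith [sq_nonneg (2 * (2 * (g : ℝ) * ((m1 : ℝ) + m2) + 4) * x + ((g : ℝ) - 4) * ((m2 : ℝ) - m1)), ha, hdisc, mul_pos ha ha]
end

section
/- For positive integers m₁, m₂ with μ = m₁ + m₂ ≥ 2 and integer g ≥ 3, one has (gμ(g−4) − 4)²(m₂−m₁)² − 8(gμ+2)²(gμ(g−2) − 2)m₁m₂ < 0; consequently the quadratic Q₂(x) = (gμ+2)²x² + (gμ(g−4)−4)(m₂−m₁)x + 2(gμ(g−2)−2)m₁m₂ is strictly positive for all real x. -/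
lemma red2 (G u : ℝ) (hg : 3 ≤ G) (hu : 2 ≤ u) :
    (G * u * (G - 4) - 4) ^ 2 * (u - 2) ^ 2
      < 8 * (G * u + 2) ^ 2 * (G * u * (G - 2) - 2) * (u - 1) := by
  nlinarith [sq_nonneg (u - 2), sq_nonneg (G - 3), mul_nonneg (sub_nonneg.2 hu) (sub_nonneg.2 hg),
    sq_nonneg (G*u), sq_nonneg ((G-3)*(u-2)), mul_nonneg (mul_nonneg (sub_nonneg.2 hu) (sub_nonneg.2 hu)) (sub_nonneg.2 hg),
    mul_nonneg (mul_nonneg (sub_nonneg.2 hg) (sub_nonneg.2 hg)) (sub_nonneg.2 hu),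
    sq_nonneg (u-1), sq_nonneg (G*u - 2)]

lemma keyD (G a b : ℝ) (hg : 3 ≤ G) (ha : 1 ≤ a) (hb : 1 ≤ b) :
    (G * (a + b) * (G - 4) - 4) ^ 2 * (b - a) ^ 2
      - 8 * (G * (a + b) + 2) ^ 2 * (G * (a + b) * (G - 2) - 2) * (a * b) < 0 := by
  have hu : 2 ≤ a + b := by linarith
  have h1 : (b - a) ^ 2 ≤ (a + b - 2) ^ 2 := by nlinarith [mul_nonneg (sub_nonneg.2 ha) (sub_nonneg.2 hb)]
  have h2 : a + b - 1 ≤ a * b := by nlinarith [mul_nonneg (sub_nonneg.2 ha) (sub_nonneg.2 hb)]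
  have h3 : (0:ℝ) < G * (a + b) * (G - 2) - 2 := by nlinarith [mul_le_mul hg hu (by norm_num) (by linarith : (0:ℝ) ≤ G)]
  have h4 : (0:ℝ) < (G * (a + b) + 2) ^ 2 := by positivity
  have h5 := red2 G (a + b) hg hu
  have h6 : (G * (a + b) * (G - 4) - 4) ^ 2 * (b - a) ^ 2
      ≤ (G * (a + b) * (G - 4) - 4) ^ 2 * (a + b - 2) ^ 2 :=
    mul_le_mul_of_nonneg_left h1 (sq_nonneg _)
  have h7 : 8 * (G * (a + b) + 2) ^ 2 * (G * (a + b) * (G - 2) - 2) * (a + b - 1)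
      ≤ 8 * (G * (a + b) + 2) ^ 2 * (G * (a + b) * (G - 2) - 2) * (a * b) := by
    apply mul_le_mul_of_nonneg_left h2
    positivity
  linarith

/-- For positive integers `m₁, m₂` with `μ = m₁ + m₂ ≥ 2` and integer `g ≥ 3`,
`(gμ(g−4) − 4)²(m₂−m₁)² − 8(gμ+2)²(gμ(g−2) − 2)m₁m₂ < 0`; consequently the quadratic
`Q₂(x) = (gμ+2)²x² + (gμ(g−4)−4)(m₂−m₁)x + 2(gμ(g−2)−2)m₁m₂` is strictly positive
for all real `x`. -/
theorem stmt_1 (g m1 m2 : ℕ) (hg : 3 ≤ g) (hm1 : 1 ≤ m1) (hm2 : 1 ≤ m2) :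
    ((g : ℝ) * ((m1 : ℝ) + m2) * ((g : ℝ) - 4) - 4) ^ 2 * ((m2 : ℝ) - m1) ^ 2
      - 8 * ((g : ℝ) * ((m1 : ℝ) + m2) + 2) ^ 2
          * ((g : ℝ) * ((m1 : ℝ) + m2) * ((g : ℝ) - 2) - 2) * ((m1 : ℝ) * m2) < 0 ∧
    ∀ x : ℝ,
      0 < ((g : ℝ) * ((m1 : ℝ) + m2) + 2) ^ 2 * x ^ 2
            + ((g : ℝ) * ((m1 : ℝ) + m2) * ((g : ℝ) - 4) - 4) * ((m2 : ℝ) - m1) * x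
            + 2 * ((g : ℝ) * ((m1 : ℝ) + m2) * ((g : ℝ) - 2) - 2) * ((m1 : ℝ) * m2) := by
  have hg' : (3:ℝ) ≤ (g:ℝ) := by exact_mod_cast hg
  have hm1' : (1:ℝ) ≤ (m1:ℝ) := by exact_mod_cast hm1
  have hm2' : (1:ℝ) ≤ (m2:ℝ) := by exact_mod_cast hm2
  have hD := keyD (g:ℝ) (m1:ℝ) (m2:ℝ) hg' hm1' hm2'
  refine ⟨hD, fun x => ?_⟩
  have hA : (0:ℝ) < ((g : ℝ) * ((m1 : ℝ) + m2) + 2) ^ 2 := by positivity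
  nlinarith [sq_nonneg (2 * ((g : ℝ) * ((m1 : ℝ) + m2) + 2) ^ 2 * x
    + ((g : ℝ) * ((m1 : ℝ) + m2) * ((g : ℝ) - 4) - 4) * ((m2 : ℝ) - m1)), hA, hD,
    mul_pos hA hA]
end

section
/- For real x₊ > x₋ > 0, set v± = √(1 + x±²) and let n ≥ 3 be an integer. Then (n−1)(x₊ + x₋)(x₊v₊^{n−2} − x₋v₋^{n−2}) − (v₊ + v₋)(v₊^{n−1} − v₋^{n−1}) > 0. -/
lemma aux_pow_sub_lt (k : ℕ) (hk : 2 ≤ k) (a b : ℝ) (hb : 0 < b) (hab : b < a) :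
    a ^ k - b ^ k < k * (a - b) * a ^ (k - 1) := by
  have hsum : (∑ i ∈ Finset.range k, a ^ i * b ^ (k - 1 - i)) * (a - b) = a ^ k - b ^ k :=
    geom_sum₂_mul a b k
  have hlt : (∑ i ∈ Finset.range k, a ^ i * b ^ (k - 1 - i)) < k * a ^ (k - 1) := by
    have h0 : (0 : ℕ) ∈ Finset.range k := by simp; omega
    calc (∑ i ∈ Finset.range k, a ^ i * b ^ (k - 1 - i))
        < ∑ _i ∈ Finset.range k, a ^ (k - 1) := by
          apply Finset.sum_lt_sum
          · intro i hi
            simp only [Finset.mem_range] at hi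
            calc a ^ i * b ^ (k - 1 - i) ≤ a ^ i * a ^ (k - 1 - i) := by
                  apply mul_le_mul_of_nonneg_left _ (pow_nonneg (hb.trans hab).le i)
                  exact pow_le_pow_left₀ hb.le hab.le _
              _ = a ^ (k - 1) := by rw [← pow_add]; congr 1; omega
          · refine ⟨0, h0, ?_⟩
            simp only [pow_zero, one_mul, Nat.sub_zero]
            apply pow_lt_pow_left₀ hab hb.le; omega
      _ = k * a ^ (k - 1) := by
          rw [Finset.sum_const, Finset.card_range, nsmul_eq_mul]
  have hab' : 0 < a - b := by linarith
  calc a ^ k - b ^ k = (∑ i ∈ Finset.range k, a ^ i * b ^ (k - 1 - i)) * (a - b) := hsum.symm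
    _ < (k * a ^ (k - 1)) * (a - b) := by
        apply mul_lt_mul_of_pos_right hlt hab'
    _ = k * (a - b) * a ^ (k - 1) := by ring

/-- For real `x₊ > x₋ > 0`, with `v± = √(1 + x±²)` and integer `n ≥ 3`,
`(n−1)(x₊ + x₋)(x₊v₊^{n−2} − x₋v₋^{n−2}) − (v₊ + v₋)(v₊^{n−1} − v₋^{n−1}) > 0`. -/
theorem stmt_19 (n : ℕ) (hn : 3 ≤ n) (xp xm : ℝ) (hxm : 0 < xm) (hlt : xm < xp) :
    0 < ((n : ℝ) - 1) * (xp + xm)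
          * (xp * Real.sqrt (1 + xp ^ 2) ^ (n - 2) - xm * Real.sqrt (1 + xm ^ 2) ^ (n - 2))
        - (Real.sqrt (1 + xp ^ 2) + Real.sqrt (1 + xm ^ 2))
          * (Real.sqrt (1 + xp ^ 2) ^ (n - 1) - Real.sqrt (1 + xm ^ 2) ^ (n - 1)) := by
  set vp := Real.sqrt (1 + xp ^ 2) with hvp
  set vm := Real.sqrt (1 + xm ^ 2) with hvm
  have hxp : 0 < xp := hxm.trans hlt
  have hvm0 : 0 < vm := Real.sqrt_pos.mpr (by positivity)
  have hvlt : vm < vp := by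
    apply Real.sqrt_lt_sqrt (by positivity)
    nlinarith
  have hvp0 : 0 < vp := hvm0.trans hvlt
  have hvpsq : vp ^ 2 = 1 + xp ^ 2 := Real.sq_sqrt (by positivity)
  have hvmsq : vm ^ 2 = 1 + xm ^ 2 := Real.sq_sqrt (by positivity)
  have key1 := aux_pow_sub_lt (n - 1) (by omega) vp vm hvm0 hvlt
  have hnn : n - 1 - 1 = n - 2 := by omega
  rw [hnn] at key1
  have hcast : ((n - 1 : ℕ) : ℝ) = (n : ℝ) - 1 := by
    have := Nat.cast_sub (show 1 ≤ n by omega) (R := ℝ)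
    simpa using this
  rw [hcast] at key1
  have key2 : (vp + vm) * (vp - vm) = (xp + xm) * (xp - xm) := by nlinarith
  have key3 : (xp - xm) * vp ^ (n - 2) < xp * vp ^ (n - 2) - xm * vm ^ (n - 2) := by
    have : vm ^ (n - 2) < vp ^ (n - 2) := by
      apply pow_lt_pow_left₀ hvlt hvm0.le; omega
    nlinarith
  have hn1 : (0 : ℝ) < (n : ℝ) - 1 := by
    have : (3 : ℝ) ≤ n := by exact_mod_cast hn
    linarith
  have hpow : (0 : ℝ) < vp ^ (n - 2) := by positivity
  have step1 : (vp + vm) * (vp ^ (n - 1) - vm ^ (n - 1))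
      < (vp + vm) * (((n : ℝ) - 1) * (vp - vm) * vp ^ (n - 2)) :=
    mul_lt_mul_of_pos_left key1 (by linarith)
  have step2 : (vp + vm) * (((n : ℝ) - 1) * (vp - vm) * vp ^ (n - 2))
      = ((n : ℝ) - 1) * (xp + xm) * ((xp - xm) * vp ^ (n - 2)) := by
    linear_combination ((n : ℝ) - 1) * vp ^ (n - 2) * key2
  have step3 : ((n : ℝ) - 1) * (xp + xm) * ((xp - xm) * vp ^ (n - 2))
      < ((n : ℝ) - 1) * (xp + xm) * (xp * vp ^ (n - 2) - xm * vm ^ (n - 2)) := by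
    apply mul_lt_mul_of_pos_left key3
    positivity
  linarith
end
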